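/- For every integer k ≥ 1, with α_k = arcsin(1/(2(2k+1)^2)) and r_k = (√2/(4k))·(1 - (2k+1)·tan α_k), there exists a geometric path with parameter r_k of length exactly 4k^2+6k+1 from A = (0,0) to B = (1,0) all of whose vertices lie in the square S = { (x,y) : |x - 1/2| + |y| ≤ 1/2 }; that is, there exist points p_0, …, p_N in S with N = 4k^2+6k+1, p_0 = A, p_N = B, dist(p_i, p_{i+1}) ≤ r_k for all 0 ≤ i < N, and dist(p_i, p_j) > r_k whenever |i - j| ≥ 2. -/

import Mathlib

open Real

/-!
The map `(u, v) ↦ ((u + v) / 2, (v - u) / 2)` sends the unit square onto `S` and divides distances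
by `√2`, so it suffices to build, inside the unit square, a path with parameter `ρ = √2 r` from
`(0, 0)` to `(1, 1)`. Take a zigzag of `2k + 1` slants crossing the square alternately upwards and
downwards, each made of `2k + 1` steps `(tan α / (2k + 1), ±1 / (2k + 1))`, with consecutive slants
joined by horizontal steps of length `ρ`; the value of `r` makes the horizontal extent exactly `1`.
A slant step has length `1 / ((2k + 1) cos α) ≤ ρ`. Two non-consecutive vertices are more than `ρ`
apart: vertically by at least `2 / (2k + 1) > ρ` if they lie on one slant, horizontally by at least
`ρ + tan α / (2k + 1)` otherwise.
-/

/-- The point (x, y) in the Euclidean plane. -/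
noncomputable def pt (x y : ℝ) : EuclideanSpace ℝ (Fin 2) :=
  (WithLp.equiv 2 (Fin 2 → ℝ)).symm ![x, y]

@[simp] lemma pt_zero (x y : ℝ) : pt x y 0 = x := rfl

@[simp] lemma pt_one (x y : ℝ) : pt x y 1 = y := rfl

lemma dist_eq_sqrt_fin_two (x y : EuclideanSpace ℝ (Fin 2)) :
    dist x y = √((x 0 - y 0) ^ 2 + (x 1 - y 1) ^ 2) := by
  simp only [EuclideanSpace.dist_eq, Fin.sum_univ_two, Real.dist_eq, sq_abs]

lemma abs_sub_le_dist_pt_fst (x₁ y₁ x₂ y₂ : ℝ) : |x₁ - x₂| ≤ dist (pt x₁ y₁) (pt x₂ y₂) := by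
  rw [dist_eq_sqrt_fin_two]
  exact Real.abs_le_sqrt (by simp only [pt_zero, pt_one]; nlinarith [sq_nonneg (y₁ - y₂)])

lemma abs_sub_le_dist_pt_snd (x₁ y₁ x₂ y₂ : ℝ) : |y₁ - y₂| ≤ dist (pt x₁ y₁) (pt x₂ y₂) := by
  rw [dist_eq_sqrt_fin_two]
  exact Real.abs_le_sqrt (by simp only [pt_zero, pt_one]; nlinarith [sq_nonneg (x₁ - x₂)])

lemma dist_pt_eq_abs_of_snd_eq (x₁ x₂ y : ℝ) : dist (pt x₁ y) (pt x₂ y) = |x₁ - x₂| := by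
  rw [dist_eq_sqrt_fin_two]
  simp [Real.sqrt_sq_eq_abs]

def IsGeometricPath {E : Type*} [PseudoMetricSpace E] (r : ℝ) (N : ℕ) (p : ℕ → E) : Prop :=
  (∀ i, i < N → dist (p i) (p (i + 1)) ≤ r) ∧
    ∀ i j, i ≤ N → j ≤ N → 2 ≤ |(i : ℤ) - (j : ℤ)| → r < dist (p i) (p j)

lemma IsGeometricPath.comp_of_dist_eq_div {E F : Type*} [PseudoMetricSpace E] [PseudoMetricSpace F]
    {r c : ℝ} {N : ℕ} {p : ℕ → E} (hp : IsGeometricPath r N p) {g : E → F}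
    (hg : ∀ x y, dist (g x) (g y) = dist x y / c) (hc : 0 < c) :
    IsGeometricPath (r / c) N (g ∘ p) := by
  refine ⟨fun i hi ↦ ?_, fun i j hi hj hij ↦ ?_⟩
  · simpa only [Function.comp, hg] using div_le_div_of_nonneg_right (hp.1 i hi) hc.le
  · simpa only [Function.comp, hg] using div_lt_div_of_pos_right (hp.2 i j hi hj hij) hc

noncomputable def toDiamond (x : EuclideanSpace ℝ (Fin 2)) : EuclideanSpace ℝ (Fin 2) :=
  pt ((x 0 + x 1) / 2) ((x 1 - x 0) / 2)

lemma dist_toDiamond (x y : EuclideanSpace ℝ (Fin 2)) :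
    dist (toDiamond x) (toDiamond y) = dist x y / √2 := by
  rw [dist_eq_sqrt_fin_two, dist_eq_sqrt_fin_two, ← Real.sqrt_div' _ zero_le_two]
  congr 1
  simp only [toDiamond, pt_zero, pt_one]
  ring

lemma toDiamond_mem_square {x : EuclideanSpace ℝ (Fin 2)} (h₀ : 0 ≤ x 0) (h₀' : x 0 ≤ 1)
    (h₁ : 0 ≤ x 1) (h₁' : x 1 ≤ 1) : |toDiamond x 0 - 1 / 2| + |toDiamond x 1| ≤ 1 / 2 := by
  simp only [toDiamond, pt_zero, pt_one]
  rcases abs_cases ((x 0 + x 1) / 2 - 1 / 2) with ⟨e, _⟩ | ⟨e, _⟩ <;>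
    rcases abs_cases ((x 1 - x 0) / 2) with ⟨e', _⟩ | ⟨e', _⟩ <;> linarith

lemma toDiamond_pt (u v : ℝ) : toDiamond (pt u v) = pt ((u + v) / 2) ((v - u) / 2) := rfl

lemma Nat.exists_eq_succ_mul_add (m i : ℕ) : ∃ q s, s ≤ m ∧ i = (m + 1) * q + s :=
  ⟨i / (m + 1), i % (m + 1), Nat.lt_succ_iff.mp (Nat.mod_lt _ m.succ_pos),
    (Nat.div_add_mod i (m + 1)).symm⟩

lemma Nat.le_of_succ_mul_add_le {m q s n t : ℕ} (ht : t ≤ m)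
    (h : (m + 1) * q + s ≤ (m + 1) * n + t) : q ≤ n := by
  by_contra! hnq
  nlinarith

section Zigzag

variable (m : ℕ) (a b f : ℝ)

/-- Vertex `(m + 1) * q + s` with `s ≤ m` is the `s`-th vertex of the `q`-th slant. A slant is made of
`m` steps `(a, b)` for even `q` and `(a, -b)` for odd `q`; consecutive slants are joined by a
horizontal step of length `f`. -/
noncomputable def zigzag (i : ℕ) : EuclideanSpace ℝ (Fin 2) :=
  let q := i / (m + 1)
  let s := i % (m + 1)
  pt (q * (m * a + f) + s * a) (if Even q then s * b else (m - s) * b)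

variable {m}

lemma zigzag_succ_mul_add {q s : ℕ} (hs : s ≤ m) :
    zigzag m a b f ((m + 1) * q + s) =
      pt (q * (m * a + f) + s * a) (if Even q then s * b else (m - s) * b) := by
  have hs' : s < m + 1 := Nat.lt_succ_of_le hs
  simp only [zigzag, Nat.mul_add_div m.succ_pos, Nat.mul_add_mod, Nat.div_eq_of_lt hs',
    Nat.mod_eq_of_lt hs', Nat.add_zero]

lemma dist_zigzag_succ_le {r : ℝ} (hab : a ^ 2 + b ^ 2 ≤ r ^ 2) (hf : 0 ≤ f) (hfr : f ≤ r)
    (i : ℕ) : dist (zigzag m a b f i) (zigzag m a b f (i + 1)) ≤ r := by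
  obtain ⟨q, s, hs, rfl⟩ := Nat.exists_eq_succ_mul_add m i
  rcases hs.lt_or_eq with hs | hs
  · rw [add_assoc, zigzag_succ_mul_add a b f hs.le, zigzag_succ_mul_add a b f hs,
      dist_eq_sqrt_fin_two, Real.sqrt_le_left (hf.trans hfr)]
    convert hab using 1
    split_ifs <;> simp only [pt_zero, pt_one] <;> push_cast <;> ring
  · subst s
    have hflat : (m + 1) * q + m + 1 = (m + 1) * (q + 1) + 0 := by ring
    rw [hflat, zigzag_succ_mul_add a b f le_rfl, zigzag_succ_mul_add a b f (Nat.zero_le m)]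
    by_cases hq : Even q
    · rw [if_pos hq, if_neg (Nat.not_even_iff_odd.mpr hq.add_one)]
      push_cast
      rw [sub_zero, dist_pt_eq_abs_of_snd_eq, abs_le]
      constructor <;> linarith
    · rw [if_neg hq, if_pos (Nat.not_even_iff_odd.mp hq).add_one]
      push_cast
      rw [sub_self, zero_mul, zero_mul, dist_pt_eq_abs_of_snd_eq, abs_le]
      constructor <;> linarith

lemma lt_dist_zigzag {r : ℝ} (hm : 1 ≤ m) (ha : 0 ≤ a) (hf : 0 ≤ f) (hb : r < 2 * b)
    (haf : r < a + f) {i j : ℕ} (hij : i + 2 ≤ j) :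
    r < dist (zigzag m a b f i) (zigzag m a b f j) := by
  obtain ⟨qi, si, hsi, rfl⟩ := Nat.exists_eq_succ_mul_add m i
  obtain ⟨qj, sj, hsj, rfl⟩ := Nat.exists_eq_succ_mul_add m j
  have hq : qi ≤ qj := Nat.le_of_succ_mul_add_le (s := si + 2) hsj (by omega)
  rw [zigzag_succ_mul_add a b f hsi, zigzag_succ_mul_add a b f hsj]
  have hm' : (1 : ℝ) ≤ m := by exact_mod_cast hm
  rcases (by omega : qi = qj ∨ qj = qi + 1 ∨ qi + 2 ≤ qj) with rfl | rfl | hfar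
  · have hs : (si : ℝ) + 2 ≤ sj := by exact_mod_cast (by omega : si + 2 ≤ sj)
    refine lt_of_lt_of_le ?_ (abs_sub_le_dist_pt_snd _ _ _ _)
    have hgap : 2 * |b| ≤ |((sj : ℝ) - si) * b| := by
      rw [abs_mul, abs_of_nonneg (by linarith : (0 : ℝ) ≤ sj - si)]
      exact mul_le_mul_of_nonneg_right (by linarith) (abs_nonneg b)
    have hv : |(if Even qi then (si : ℝ) * b else (m - si) * b) -
        (if Even qi then (sj : ℝ) * b else (m - sj) * b)| = |((sj : ℝ) - si) * b| := by
      split_ifs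
      · rw [← abs_neg]; ring_nf
      · ring_nf
    rw [hv]
    linarith [le_abs_self b]
  · have hs : (si : ℝ) + 1 ≤ sj + m := by
      rw [mul_add_one] at hij
      exact_mod_cast (by omega : si + 1 ≤ sj + m)
    refine lt_of_lt_of_le ?_ ((neg_le_abs _).trans (abs_sub_le_dist_pt_fst _ _ _ _))
    push_cast
    nlinarith [mul_le_mul_of_nonneg_right hs ha]
  · have hq2 : (qi : ℝ) + 2 ≤ qj := by exact_mod_cast hfar
    have hsi' : (si : ℝ) ≤ m := by exact_mod_cast hsi
    refine lt_of_lt_of_le ?_ ((neg_le_abs _).trans (abs_sub_le_dist_pt_fst _ _ _ _))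
    nlinarith [mul_le_mul_of_nonneg_right hq2 (by positivity : (0 : ℝ) ≤ m * a + f),
      mul_le_mul_of_nonneg_right hsi' ha, mul_le_mul_of_nonneg_right hm' ha,
      mul_nonneg (Nat.cast_nonneg sj) ha]

lemma zigzag_mem_box {n i : ℕ} (ha : 0 ≤ a) (hb : 0 ≤ b) (hf : 0 ≤ f)
    (hi : i ≤ (m + 1) * n + m) :
    (0 ≤ zigzag m a b f i 0 ∧ zigzag m a b f i 0 ≤ n * (m * a + f) + m * a) ∧
      (0 ≤ zigzag m a b f i 1 ∧ zigzag m a b f i 1 ≤ m * b) := by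
  obtain ⟨q, s, hs, rfl⟩ := Nat.exists_eq_succ_mul_add m i
  have hq : (q : ℝ) ≤ n := by exact_mod_cast Nat.le_of_succ_mul_add_le le_rfl hi
  have hs' : (s : ℝ) ≤ m := by exact_mod_cast hs
  rw [zigzag_succ_mul_add a b f hs, pt_zero, pt_one]
  refine ⟨⟨by positivity, by gcongr⟩, ?_⟩
  split_ifs
  · exact ⟨by positivity, by gcongr⟩
  · exact ⟨mul_nonneg (by linarith) hb, by nlinarith [mul_nonneg (Nat.cast_nonneg s) hb]⟩

lemma zigzag_isGeometricPath {r : ℝ} (hm : 1 ≤ m) (ha : 0 < a) (hf : 0 ≤ f)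
    (hab : a ^ 2 + b ^ 2 ≤ r ^ 2) (hfr : f ≤ r) (hb : r < 2 * b) (haf : r < a + f) (N : ℕ) :
    IsGeometricPath r N (zigzag m a b f) := by
  refine ⟨fun i _ ↦ dist_zigzag_succ_le a b f hab hf hfr i, fun i j _ _ hij ↦ ?_⟩
  rcases le_abs'.mp hij with h | h
  · exact lt_dist_zigzag a b f hm ha.le hf hb haf (by omega)
  · rw [dist_comm]
    exact lt_dist_zigzag a b f hm ha.le hf hb haf (by omega)

end Zigzag

lemma one_sub_le_cos_arcsin {s : ℝ} (h₀ : 0 ≤ s) (h₁ : s ≤ 1) : 1 - s ≤ cos (arcsin s) := by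
  rw [cos_arcsin]
  exact (le_abs_self _).trans (Real.abs_le_sqrt (by nlinarith))

lemma cos_arcsin_pos {s : ℝ} (h₀ : 0 ≤ s) (h₁ : s < 1) : 0 < cos (arcsin s) :=
  (sub_pos.mpr h₁).trans_le (one_sub_le_cos_arcsin h₀ h₁.le)

lemma tan_arcsin_pos {s : ℝ} (h₀ : 0 < s) (h₁ : s < 1) : 0 < tan (arcsin s) := by
  rw [tan_arcsin]
  exact div_pos h₀ (Real.sqrt_pos.mpr (by nlinarith))

lemma tan_div_sq_add_one_div_sq {θ : ℝ} (K : ℝ) (hθ : cos θ ≠ 0) :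
    (tan θ / K) ^ 2 + (1 / K) ^ 2 = (1 / (K * cos θ)) ^ 2 := by
  rw [div_pow, div_pow, ← add_div, one_pow, add_comm, ← inv_inv (1 + tan θ ^ 2),
    inv_one_add_tan_sq hθ]
  ring

-- The choice `sin α = 1 / (2 K²)` makes `K² sin α = 1 / 2` and `K cos α ≥ K - 1 / 2`.
lemma one_div_mul_cos_arcsin_le {K : ℝ} (hK : 1 < K) :
    1 / (K * cos (arcsin (1 / (2 * K ^ 2)))) ≤
      (1 - K * tan (arcsin (1 / (2 * K ^ 2)))) / (K - 1) := by
  set s := 1 / (2 * K ^ 2) with hs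
  have hs₀ : 0 < s := by positivity
  have hKs : K * s ≤ 1 / 2 := by
    rw [hs, show K * (1 / (2 * K ^ 2)) = 1 / 2 * (1 / K) by field_simp]
    exact mul_le_of_le_one_right (by norm_num) ((div_le_one (by linarith)).mpr hK.le)
  have hcos : K * (1 - s) ≤ K * cos (arcsin s) :=
    mul_le_mul_of_nonneg_left (one_sub_le_cos_arcsin hs₀.le (by nlinarith)) (by linarith)
  have hsin : K * tan (arcsin s) * (K * cos (arcsin s)) = 1 / 2 := by
    rw [mul_mul_mul_comm, tan_mul_cos (cos_arcsin_pos hs₀.le (by nlinarith)).ne',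
      sin_arcsin (by linarith) (by nlinarith), hs]
    field_simp
  rw [div_le_div_iff₀ (by nlinarith) (by linarith), sub_mul, hsin]
  linarith

/-- `tan α_k`: the slants make the angle `α_k` with the vertical. -/
noncomputable def slantTan (k : ℕ) : ℝ := tan (arcsin (1 / (2 * (2 * (k : ℝ) + 1) ^ 2)))

/-- `√2 r_k`, the parameter `r_k` measured in the coordinates in which `S` is the unit square. -/
noncomputable def flatLength (k : ℕ) : ℝ := (1 - (2 * (k : ℝ) + 1) * slantTan k) / (2 * k)

lemma one_div_two_mul_sq_lt_one (k : ℕ) : 1 / (2 * (2 * (k : ℝ) + 1) ^ 2) < 1 := by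
  rw [div_lt_one (by positivity)]
  nlinarith [(Nat.cast_nonneg k : (0 : ℝ) ≤ k)]

lemma slantTan_pos (k : ℕ) : 0 < slantTan k :=
  tan_arcsin_pos (by positivity) (one_div_two_mul_sq_lt_one k)

section Constants

variable {k : ℕ}

lemma one_div_mul_cos_le_flatLength (hk : 1 ≤ k) :
    1 / ((2 * k + 1) * cos (arcsin (1 / (2 * (2 * (k : ℝ) + 1) ^ 2)))) ≤ flatLength k := by
  have hk' : (1 : ℝ) ≤ k := by exact_mod_cast hk
  have h := one_div_mul_cos_arcsin_le (K := 2 * k + 1) (by linarith)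
  rwa [add_sub_cancel_right, ← slantTan, ← flatLength] at h

lemma flatLength_nonneg (hk : 1 ≤ k) : 0 ≤ flatLength k :=
  (one_div_nonneg.mpr (mul_nonneg (by positivity) (cos_arcsin_nonneg _))).trans
    (one_div_mul_cos_le_flatLength hk)

lemma slant_sq_le_flatLength_sq (hk : 1 ≤ k) :
    (slantTan k / (2 * k + 1)) ^ 2 + (1 / (2 * k + 1)) ^ 2 ≤ flatLength k ^ 2 := by
  rw [slantTan, tan_div_sq_add_one_div_sq _
    (cos_arcsin_pos (by positivity) (one_div_two_mul_sq_lt_one k)).ne']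
  exact pow_le_pow_left₀ (one_div_nonneg.mpr (mul_nonneg (by positivity) (cos_arcsin_nonneg _)))
    (one_div_mul_cos_le_flatLength hk) 2

lemma flatLength_lt (hk : 1 ≤ k) : flatLength k < 2 * (1 / (2 * k + 1)) := by
  have hk' : (1 : ℝ) ≤ k := by exact_mod_cast hk
  rw [flatLength, div_lt_iff₀ (by positivity)]
  field_simp
  nlinarith [mul_pos (by positivity : (0 : ℝ) < (2 * k + 1) ^ 2) (slantTan_pos k)]

lemma width_eq_one (hk : 1 ≤ k) :
    2 * k * ((2 * k + 1) * (slantTan k / (2 * k + 1)) + flatLength k) +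
      (2 * k + 1) * (slantTan k / (2 * k + 1)) = 1 := by
  have hk' : (k : ℝ) ≠ 0 := by positivity
  rw [flatLength]
  field_simp
  ring

end Constants

/-- For every integer k ≥ 1, with α_k = arcsin(1/(2(2k+1)²)) and
r_k = (√2/(4k))(1 - (2k+1)·tan α_k), there is a geometric path with parameter r_k
of length exactly N = 4k²+6k+1 from A = (0,0) to B = (1,0), all of whose vertices
lie in the square S = { (x,y) : |x - 1/2| + |y| ≤ 1/2 }. -/
theorem stmt_15 (k : ℕ) (hk : 1 ≤ k) (α r : ℝ)
    (hα : α = Real.arcsin (1 / (2 * (2 * (k : ℝ) + 1) ^ 2)))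
    (hr : r = (Real.sqrt 2 / (4 * (k : ℝ))) * (1 - (2 * (k : ℝ) + 1) * Real.tan α))
    (N : ℕ) (hN : N = 4 * k ^ 2 + 6 * k + 1) :
    ∃ p : ℕ → EuclideanSpace ℝ (Fin 2),
      p 0 = pt 0 0 ∧ p N = pt 1 0 ∧
      (∀ i, i ≤ N → |p i 0 - 1/2| + |p i 1| ≤ 1/2) ∧
      (∀ i, i < N → dist (p i) (p (i + 1)) ≤ r) ∧
      (∀ i j, i ≤ N → j ≤ N → 2 ≤ |(i : ℤ) - (j : ℤ)| → r < dist (p i) (p j)) := by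
  have hr' : flatLength k / √2 = r := by
    have hk' : (k : ℝ) ≠ 0 := by positivity
    rw [hr, hα, flatLength, ← slantTan]
    field_simp
    rw [Real.sq_sqrt zero_le_two]
    ring
  have hpath := (zigzag_isGeometricPath (m := 2 * k + 1) (slantTan k / (2 * k + 1))
    (1 / (2 * k + 1)) (flatLength k) (Nat.le_add_left 1 _)
    (div_pos (slantTan_pos k) (by positivity)) (flatLength_nonneg hk)
    (by exact_mod_cast slant_sq_le_flatLength_sq hk) le_rfl (by exact_mod_cast flatLength_lt hk)
    (lt_add_of_pos_left _ (div_pos (slantTan_pos k) (by positivity))) N).comp_of_dist_eq_div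
    dist_toDiamond (by positivity)
  rw [hr'] at hpath
  have hN' : N = (2 * k + 1 + 1) * (2 * k) + (2 * k + 1) := by rw [hN]; ring
  refine ⟨_, ?_, ?_, ?_, hpath.1, hpath.2⟩ <;> simp only [Function.comp_apply]
  · simp [zigzag, toDiamond_pt]
  · rw [hN', zigzag_succ_mul_add _ _ _ le_rfl, if_pos (even_two_mul k), toDiamond_pt]
    push_cast
    rw [width_eq_one hk, mul_one_div_cancel (by positivity)]
    norm_num
  · intro i hi
    obtain ⟨⟨hx₀, hx₁⟩, hy₀, hy₁⟩ := zigzag_mem_box (n := 2 * k) (slantTan k / (2 * k + 1))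
      (1 / (2 * k + 1)) (flatLength k) (div_nonneg (slantTan_pos k).le (by positivity))
      (by positivity) (flatLength_nonneg hk) (hN' ▸ hi)
    push_cast at hx₁ hy₁
    rw [width_eq_one hk] at hx₁
    rw [mul_one_div_cancel (by positivity)] at hy₁
    exact toDiamond_mem_square hx₀ hx₁ hy₀ hy₁
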